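/- Let R be a connected graded k-algebra generated in degree one with dim_k R_1 < ∞ (a standard algebra). Then R is graded right coherent (every finitely generated homogeneous right ideal is finitely presented as a graded module) if and only if the family of all finitely generated homogeneous right ideals of R is a coherent family. -/

import Mathlib

open MulOpposite

namespace NCG

variable (k : Type) [Field k] (R : Type) [Ring R] [Algebra k R]

/-- `𝒜` is a connected grading on the `k`-algebra `R`: the graded pieces multiply
correctly, `R` is their internal direct sum, and the degree-zero piece is `k·1`. -/
def IsConnAlg (𝒜 : ℕ → Submodule k R) : Prop :=
  (∀ (i j : ℕ), ∀ x ∈ 𝒜 i, ∀ y ∈ 𝒜 j, x * y ∈ 𝒜 (i + j)) ∧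
  DirectSum.IsInternal 𝒜 ∧
  𝒜 0 = Submodule.span k {(1 : R)}

/-- `R` is locally finite: every graded piece is finite-dimensional over `k`. -/
def LocFin (𝒜 : ℕ → Submodule k R) : Prop := ∀ i, FiniteDimensional k (𝒜 i)

/-- `R` is a finitely generated `k`-algebra. -/
def FinGenAlg : Prop := ∃ s : Finset R, Algebra.adjoin k (s : Set R) = ⊤

/-- extension of the grading to `ℤ` (zero in negative degrees). -/
noncomputable def grZ (𝒜 : ℕ → Submodule k R) : ℤ → Submodule k R :=
  fun j => if 0 ≤ j then 𝒜 j.toNat else ⊥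

/-- the augmentation ideal `R_{≥1}`, as a right ideal of `R`. -/
def aug (𝒜 : ℕ → Submodule k R) : Submodule Rᵐᵒᵖ R :=
  Submodule.span Rᵐᵒᵖ (⋃ i : ℕ, ⋃ _ : 1 ≤ i, ((𝒜 i : Set R)))

variable (M : Type) [AddCommGroup M] [Module Rᵐᵒᵖ M] [Module k M]

/-- `ℳ` makes `M` a graded right module over the graded algebra `(R, 𝒜)`. -/
def IsGradedMod (𝒜 : ℕ → Submodule k R) (ℳ : ℤ → Submodule k M) : Prop :=
  (∀ (i : ℕ) (j : ℤ), ∀ r ∈ 𝒜 i, ∀ x ∈ ℳ j, (op r) • x ∈ ℳ (j + i)) ∧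
  DirectSum.IsInternal ℳ

/-- the submodule `N` of `M` is generated in degrees at most `dd`. -/
def GenLE (ℳ : ℤ → Submodule k M) (N : Submodule Rᵐᵒᵖ M) (dd : ℤ) : Prop :=
  N ≤ Submodule.span Rᵐᵒᵖ {x : M | x ∈ N ∧ ∃ j ≤ dd, x ∈ ℳ j}

/-- the submodule `N` is a graded (homogeneous) submodule of `M`. -/
def IsGradedSub (ℳ : ℤ → Submodule k M) (N : Submodule Rᵐᵒᵖ M) : Prop :=
  N ≤ Submodule.span Rᵐᵒᵖ {x : M | x ∈ N ∧ ∃ j : ℤ, x ∈ ℳ j}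

/-- the Hilbert series of a submodule `N` of `M`, as its coefficient function. -/
noncomputable def hilb (ℳ : ℤ → Submodule k M) [IsScalarTower k Rᵐᵒᵖ M]
    (N : Submodule Rᵐᵒᵖ M) : ℤ → ℕ :=
  fun j => Module.finrank k ↥(ℳ j ⊓ N.restrictScalars k)

/-- the Hilbert series of a right ideal of `R`, as its coefficient function. -/
noncomputable def hilbI (𝒜 : ℕ → Submodule k R) (I : Submodule Rᵐᵒᵖ R) : ℕ → ℕ :=
  fun j => Module.finrank k ↥(𝒜 j ⊓ I.restrictScalars k)

/-- the Hilbert series of the algebra `R`, as its coefficient function. -/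
noncomputable def hilbA (𝒜 : ℕ → Submodule k R) : ℕ → ℕ :=
  fun j => Module.finrank k ↥(𝒜 j)

/-- `v` is a solution of the homogeneous linear equation `a₁x₁ + ⋯ + aₙxₙ = 0`. -/
def IsSol {n : ℕ} (a : Fin n → M) (v : Fin n → R) : Prop :=
  ∑ i, op (v i) • a i = 0

/-- `w` is a homogeneous element of degree `j` of the free module `⊕ᵢ R(-dg i)`. -/
def FreeHomog (𝒜 : ℕ → Submodule k R) {n : ℕ} (dg : Fin n → ℤ)
    (w : Fin n → R) (j : ℤ) : Prop :=
  ∀ i, w i ∈ grZ k R 𝒜 (j - dg i)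

/-- The module of solutions of the equation with homogeneous coefficients `a` (of
degrees `dg`) is generated in degrees at most `D`: every solution is an `R`-linear
combination of homogeneous solutions of degree at most `D`. -/
def SolGenLE (𝒜 : ℕ → Submodule k R) {n : ℕ} (a : Fin n → M) (dg : Fin n → ℤ)
    (D : ℤ) : Prop :=
  ∀ v : Fin n → R, IsSol R M a v →
    v ∈ Submodule.span Rᵐᵒᵖ
      {w : Fin n → R | IsSol R M a w ∧ ∃ j ≤ D, FreeHomog k R 𝒜 dg w j}

/-- The module of solutions of the equation with coefficients `a` is generated by the
(finitely many) solutions `h`. -/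
def SolSpanBy {n : ℕ} (a : Fin n → M) {m : ℕ} (h : Fin m → (Fin n → R)) : Prop :=
  (∀ j, IsSol R M a (h j)) ∧
  ∀ v : Fin n → R, IsSol R M a v → v ∈ Submodule.span Rᵐᵒᵖ (Set.range h)

/-- `D` witnesses the effective coherence of the graded module `M`. -/
def WitnessEC (𝒜 : ℕ → Submodule k R) (ℳ : ℤ → Submodule k M) (D : ℕ → ℕ) : Prop :=
  (∀ d, d ≤ D d) ∧
  ∀ (d n : ℕ) (a : Fin n → M) (dg : Fin n → ℤ),
    (∀ i, a i ∈ ℳ (dg i)) → (∀ i, dg i ≤ (d : ℤ)) →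
    SolGenLE k R M 𝒜 a dg ((D d : ℕ) : ℤ)

/-- the graded module `M` is effectively coherent. -/
def EffCoh (𝒜 : ℕ → Submodule k R) (ℳ : ℤ → Submodule k M) : Prop :=
  ∃ D : ℕ → ℕ, WitnessEC k R M 𝒜 ℳ D

/-- the algebra `R` is effectively coherent (as a right module over itself). -/
noncomputable def EffCohAlg (𝒜 : ℕ → Submodule k R) : Prop :=
  EffCoh k R R 𝒜 (grZ k R 𝒜)

/-- `M` is a finitely presented graded right `R`-module. -/
def ModFinPres (𝒜 : ℕ → Submodule k R) (ℳ : ℤ → Submodule k M) : Prop :=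
  ∃ (t : ℕ) (b : Fin t → M) (db : Fin t → ℤ),
    (∀ i, b i ∈ ℳ (db i)) ∧ Submodule.span Rᵐᵒᵖ (Set.range b) = ⊤ ∧
    ∃ (m : ℕ) (h : Fin m → (Fin t → R)) (e : Fin m → ℤ),
      (∀ j, FreeHomog k R 𝒜 db (h j) (e j)) ∧ SolSpanBy R M b h

/-- `R` is a finitely presented algebra: there is an exact sequence
`F₂ → F₁ → R → k_R → 0` of graded right modules with `F₁, F₂` finite graded free. -/
def AlgFinPres (𝒜 : ℕ → Submodule k R) : Prop :=
  ∃ (n : ℕ) (g : Fin n → R) (dg : Fin n → ℕ),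
    (∀ i, g i ∈ 𝒜 (dg i)) ∧
    Submodule.span Rᵐᵒᵖ (Set.range g) = aug k R 𝒜 ∧
    ∃ (m : ℕ) (h : Fin m → (Fin n → R)) (e : Fin m → ℤ),
      (∀ j, FreeHomog k R 𝒜 (fun i => (dg i : ℤ)) (h j) (e j)) ∧
      SolSpanBy R R g h

/-- `R` admits an exact sequence `F₃ → F₂ → F₁ → R → k_R → 0` of graded right modules
with all `Fᵢ` finite graded free (finitely presented with `dim Tor₃ < ∞`). -/
def AlgFinPres3 (𝒜 : ℕ → Submodule k R) : Prop :=
  ∃ (n : ℕ) (g : Fin n → R) (dg : Fin n → ℕ),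
    (∀ i, g i ∈ 𝒜 (dg i)) ∧
    Submodule.span Rᵐᵒᵖ (Set.range g) = aug k R 𝒜 ∧
    ∃ (m : ℕ) (h : Fin m → (Fin n → R)) (e : Fin m → ℤ),
      (∀ j, FreeHomog k R 𝒜 (fun i => (dg i : ℤ)) (h j) (e j)) ∧
      SolSpanBy R R g h ∧
      ∃ (p : ℕ) (u : Fin p → (Fin m → R)) (f : Fin p → ℤ),
        (∀ l, FreeHomog k R 𝒜 e (u l) (f l)) ∧
        SolSpanBy R (Fin n → R) h u

/-- membership in the class `D(n,a,b,c)`: there is an exact sequence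
`F₃ → F₂ → F₁ → R → k_R → 0` with `F₁` of rank at most `n` and basis in degrees `≤ a`,
`F₂` with basis in degrees `≤ b` and `F₃` with basis in degrees `≤ c`. -/
def InDClass (𝒜 : ℕ → Submodule k R) (n a b c : ℕ) : Prop :=
  ∃ (n' : ℕ), n' ≤ n ∧ ∃ (g : Fin n' → R) (dg : Fin n' → ℕ),
    (∀ i, dg i ≤ a) ∧ (∀ i, g i ∈ 𝒜 (dg i)) ∧
    Submodule.span Rᵐᵒᵖ (Set.range g) = aug k R 𝒜 ∧
    ∃ (m : ℕ) (h : Fin m → (Fin n' → R)) (e : Fin m → ℤ),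
      (∀ j, e j ≤ (b : ℤ)) ∧
      (∀ j, FreeHomog k R 𝒜 (fun i => (dg i : ℤ)) (h j) (e j)) ∧
      SolSpanBy R R g h ∧
      SolGenLE k R (Fin n' → R) 𝒜 h e (c : ℤ)

/-- the right ideal `I` has a finite homogeneous generating family in degrees `≤ d`. -/
def FinGenLE (𝒜 : ℕ → Submodule k R) (I : Submodule Rᵐᵒᵖ R) (d : ℕ) : Prop :=
  ∃ (n : ℕ) (x : Fin n → R) (dx : Fin n → ℕ),
    (∀ i, dx i ≤ d) ∧ (∀ i, x i ∈ 𝒜 (dx i)) ∧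
    Submodule.span Rᵐᵒᵖ (Set.range x) = I

/-- lexicographic strict order on `ℕ`-indexed coefficient functions: `f <_lex g`. -/
def LexLtN (f g : ℕ → ℕ) : Prop := ∃ q, (∀ i < q, f i = g i) ∧ f q < g q

/-- lexicographic strict order on `ℤ`-indexed coefficient functions: `f <_lex g`. -/
def LexLtZ (f g : ℤ → ℕ) : Prop := ∃ q, (∀ i < q, f i = g i) ∧ f q < g q

/-- the right annihilator ideal of an element `a : R`. -/
def rAnn (a : R) : Submodule Rᵐᵒᵖ R where
  carrier := {r : R | a * r = 0}
  add_mem' := by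
    intro x y hx hy
    simp only [Set.mem_setOf_eq] at *
    rw [mul_add, hx, hy, add_zero]
  zero_mem' := by simp
  smul_mem' := by
    intro c x hx
    simp only [Set.mem_setOf_eq] at *
    rw [← op_unop c, op_smul_eq_mul, ← mul_assoc, hx, zero_mul]

/-- the colon right ideal `(x : J) = { a ∈ R | x·a ∈ J }`. -/
def colon (x : R) (J : Submodule Rᵐᵒᵖ R) : Submodule Rᵐᵒᵖ R where
  carrier := {a : R | x * a ∈ J}
  add_mem' := by
    intro p q hp hq
    simp only [Set.mem_setOf_eq] at *
    rw [mul_add]; exact J.add_mem hp hq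
  zero_mem' := by simp
  smul_mem' := by
    intro c p hp
    simp only [Set.mem_setOf_eq] at *
    rw [← op_unop c, op_smul_eq_mul, ← mul_assoc]
    exact J.smul_mem (op (unop c)) hp

/-- `F` is a coherent family of right ideals of `R`. -/
def IsCohFam (𝒜 : ℕ → Submodule k R) (F : Set (Submodule Rᵐᵒᵖ R)) : Prop :=
  (∀ I ∈ F, I.FG ∧ IsGradedSub k R R (grZ k R 𝒜) I) ∧
  (⊥ : Submodule Rᵐᵒᵖ R) ∈ F ∧ aug k R 𝒜 ∈ F ∧
  ∀ I ∈ F, I ≠ ⊥ → ∃ J ∈ F, J ≠ I ∧ ∃ x : R, (∃ dx : ℕ, x ∈ 𝒜 dx) ∧ x ∈ I ∧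
    I = J ⊔ Submodule.span Rᵐᵒᵖ {x} ∧
    (∀ dI : ℤ, GenLE k R R (grZ k R 𝒜) I dI → GenLE k R R (grZ k R 𝒜) J dI) ∧
    colon R x J ∈ F

/-- the family `F` of ideals has degree at most `d`. -/
def CohFamDegLE (𝒜 : ℕ → Submodule k R) (F : Set (Submodule Rᵐᵒᵖ R)) (d : ℕ) : Prop :=
  ∀ I ∈ F, GenLE k R R (grZ k R 𝒜) I (d : ℤ)

/-- the right ideal `I` is finitely presented as a graded module. -/
def IdealFinPres (𝒜 : ℕ → Submodule k R) (I : Submodule Rᵐᵒᵖ R) : Prop :=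
  ∃ (n : ℕ) (x : Fin n → R) (dx : Fin n → ℕ),
    (∀ i, x i ∈ 𝒜 (dx i)) ∧ Submodule.span Rᵐᵒᵖ (Set.range x) = I ∧
    ∃ (m : ℕ) (h : Fin m → (Fin n → R)) (e : Fin m → ℤ),
      (∀ j, FreeHomog k R 𝒜 (fun i => (dx i : ℤ)) (h j) (e j)) ∧
      SolSpanBy R R x h

/-- `R` is graded right coherent: every finitely generated homogeneous right ideal
is finitely presented as a graded module. -/
def GradedCoherent (𝒜 : ℕ → Submodule k R) : Prop :=
  ∀ I : Submodule Rᵐᵒᵖ R, I.FG → IsGradedSub k R R (grZ k R 𝒜) I →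
    IdealFinPres k R 𝒜 I

/-- a free resolution of the right ideal `I` by finite graded free modules whose
bases at level `i` sit in degrees at most `B i`. -/
def FreeResBdd (𝒜 : ℕ → Submodule k R) (I : Submodule Rᵐᵒᵖ R) (B : ℕ → ℤ) : Prop :=
  ∃ (r : ℕ → ℕ) (dgs : (i : ℕ) → Fin (r i) → ℤ)
    (g0 : Fin (r 0) → R)
    (g : (i : ℕ) → Fin (r (i + 1)) → (Fin (r i) → R)),
    (∀ l, dgs 0 l ≤ B 0) ∧
    (∀ l, g0 l ∈ grZ k R 𝒜 (dgs 0 l)) ∧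
    Submodule.span Rᵐᵒᵖ (Set.range g0) = I ∧
    (∀ (i : ℕ) (l : Fin (r (i + 1))), dgs (i + 1) l ≤ B (i + 1)) ∧
    (∀ (i : ℕ) (l : Fin (r (i + 1))), FreeHomog k R 𝒜 (dgs i) (g i l) (dgs (i + 1) l)) ∧
    SolSpanBy R R g0 (g 0) ∧
    (∀ i : ℕ, SolSpanBy R (Fin (r i) → R) (g i) (g (i + 1)))

/-- the Artin–Zhang property for a graded module `M`. -/
def ArtinZhang (ℳ : ℤ → Submodule k M) [IsScalarTower k Rᵐᵒᵖ M] : Prop :=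
  ∀ h : ℤ → ℕ, ∃ d : ℤ, 0 < d ∧
    (∀ L : Submodule Rᵐᵒᵖ M, L.FG → hilb k R M ℳ L = h → GenLE k R M ℳ L d) ∧
    (∀ L : Submodule Rᵐᵒᵖ M, GenLE k R M ℳ L d →
      (∀ j ≤ d, hilb k R M ℳ L j = h j) → hilb k R M ℳ L = h)

/-- `M` is effective for series: for each `d`, only finitely many Hilbert series of
submodules generated in degrees `≤ d`. -/
def EffForSeries (ℳ : ℤ → Submodule k M) [IsScalarTower k Rᵐᵒᵖ M] : Prop :=
  ∀ d : ℤ, {h : ℤ → ℕ | ∃ L : Submodule Rᵐᵒᵖ M,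
    GenLE k R M ℳ L d ∧ h = hilb k R M ℳ L}.Finite

/-- `M` is effective for generators: the Hilbert series of a finitely generated
submodule bounds the degrees of its generators. -/
def EffForGen (ℳ : ℤ → Submodule k M) [IsScalarTower k Rᵐᵒᵖ M] : Prop :=
  ∀ h : ℤ → ℕ, ∃ d : ℤ,
    ∀ L : Submodule Rᵐᵒᵖ M, L.FG → hilb k R M ℳ L = h → GenLE k R M ℳ L d

/-- bundled data of a graded `k`-algebra. -/
structure AlgData (k : Type) [Field k] : Type 1 where
  carrier : Type
  [ringStr : Ring carrier]
  [algStr : Algebra k carrier]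
  grading : ℕ → Submodule k carrier

attribute [instance] AlgData.ringStr AlgData.algStr

/-- bundled data of a graded right `R`-module. -/
structure ModData (k R : Type) [Field k] [Ring R] [Algebra k R] : Type 1 where
  carrier : Type
  [acg : AddCommGroup carrier]
  [modR : Module Rᵐᵒᵖ carrier]
  [modk : Module k carrier]
  [tower : IsScalarTower k Rᵐᵒᵖ carrier]
  grading : ℤ → Submodule k carrier

attribute [instance] ModData.acg ModData.modR ModData.modk ModData.tower


section Aux

variable {k R : Type} [Field k] [Ring R] [Algebra k R] {𝒜 : ℕ → Submodule k R}

lemma grZ_natCast (n : ℕ) : grZ k R 𝒜 (n : ℤ) = 𝒜 n := by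
  simp [grZ]

lemma grZ_neg {j : ℤ} (h : j < 0) : grZ k R 𝒜 j = ⊥ := by
  simp [grZ, not_le.2 h]

lemma exists_nat_deg {x : R} {j : ℤ} (h : x ∈ grZ k R 𝒜 j) : ∃ n : ℕ, x ∈ 𝒜 n := by
  rcases lt_or_ge j 0 with hj | hj
  · rw [grZ_neg hj] at h
    simp only [Submodule.mem_bot] at h
    exact ⟨0, h ▸ (𝒜 0).zero_mem⟩
  · exact ⟨j.toNat, by rwa [grZ, if_pos hj] at h⟩

/-- build a `GradedRing` structure from `IsConnAlg`. -/
noncomputable def mkGradedRing (hconn : IsConnAlg k R 𝒜) : GradedRing 𝒜 :=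
  letI : DirectSum.Decomposition 𝒜 := hconn.2.1.chooseDecomposition
  { one_mem := by
      rw [hconn.2.2]
      exact Submodule.mem_span_singleton_self 1
    mul_mem := fun {i j gi gj} hi hj => hconn.1 i j gi hi gj hj }

end Aux
section Aux2

variable {k R : Type} [Field k] [Ring R] [Algebra k R] {𝒜 : ℕ → Submodule k R}

open Submodule in
/-- extract a finite generating family from a generating set. -/
lemma exists_fin_gens {I : Submodule Rᵐᵒᵖ R} (hFG : I.FG) {S : Set R}
    (hS : S ⊆ I) (hle : I ≤ Submodule.span Rᵐᵒᵖ S) :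
    ∃ (n : ℕ) (x : Fin n → R), (∀ i, x i ∈ S) ∧
      Submodule.span Rᵐᵒᵖ (Set.range x) = I := by
  classical
  obtain ⟨T, hT⟩ := hFG
  choose U hU1 hU2 using fun t : T =>
    Submodule.mem_span_finite_of_mem_span (hle (hT ▸ Submodule.subset_span t.2))
  let V : Finset R := Finset.univ.biUnion fun t : T => U t
  have hVS : (V : Set R) ⊆ S := by
    intro v hv
    simp only [V, Finset.coe_biUnion, Set.mem_iUnion] at hv
    obtain ⟨t, _, hvt⟩ := hv
    exact hU1 t hvt
  have hspan : Submodule.span Rᵐᵒᵖ (V : Set R) = I := by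
    apply le_antisymm
    · exact Submodule.span_le.2 (fun v hv => hS (hVS hv))
    · rw [← hT, Submodule.span_le]
      intro t ht
      refine Submodule.span_mono ?_ (hU2 ⟨t, ht⟩)
      intro u hu
      simp only [V, Finset.coe_biUnion, Set.mem_iUnion]
      exact ⟨⟨t, ht⟩, Finset.mem_univ _, hu⟩
  refine ⟨V.card, fun i => (V.equivFin.symm i : R), fun i => hVS (V.equivFin.symm i).2, ?_⟩
  rw [← hspan]
  congr 1
  ext v
  constructor
  · rintro ⟨i, rfl⟩; exact (V.equivFin.symm i).2
  · intro hv; exact ⟨V.equivFin ⟨v, hv⟩, by simp⟩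

/-- a f.g. graded ideal has a finite homogeneous generating family. -/
lemma exists_homog_gens {I : Submodule Rᵐᵒᵖ R} (hFG : I.FG)
    (hgr : IsGradedSub k R R (grZ k R 𝒜) I) :
    ∃ (n : ℕ) (x : Fin n → R) (dx : Fin n → ℕ),
      (∀ i, x i ∈ 𝒜 (dx i)) ∧ (∀ i, x i ∈ I) ∧
      Submodule.span Rᵐᵒᵖ (Set.range x) = I := by
  obtain ⟨n, x, hx, hspan⟩ := exists_fin_gens hFG (S := {y : R | y ∈ I ∧ ∃ j : ℤ, y ∈ grZ k R 𝒜 j})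
    (fun y hy => hy.1) hgr
  choose hmem j hj using hx
  choose d hd using fun i => exists_nat_deg (𝒜 := 𝒜) (hj i)
  exact ⟨n, x, d, hd, hmem, hspan⟩

lemma genLE_mono {I : Submodule Rᵐᵒᵖ R} {d d' : ℤ} (h : d ≤ d')
    (hg : GenLE k R R (grZ k R 𝒜) I d) : GenLE k R R (grZ k R 𝒜) I d' := by
  refine hg.trans (Submodule.span_mono ?_)
  rintro y ⟨hy, j, hjd, hja⟩
  exact ⟨hy, j, hjd.trans h, hja⟩

lemma genLE_of_gens {I : Submodule Rᵐᵒᵖ R} {n : ℕ} {x : Fin n → R} {dx : Fin n → ℕ}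
    (hx : ∀ i, x i ∈ 𝒜 (dx i)) (hxI : ∀ i, x i ∈ I)
    (hspan : Submodule.span Rᵐᵒᵖ (Set.range x) = I) {d : ℤ} (hd : ∀ i, (dx i : ℤ) ≤ d) :
    GenLE k R R (grZ k R 𝒜) I d := by
  rw [GenLE, ← hspan]
  refine Submodule.span_mono ?_
  rintro y ⟨i, rfl⟩
  refine ⟨Submodule.subset_span ⟨i, rfl⟩, dx i, hd i, ?_⟩
  rw [grZ_natCast]
  exact hx i

lemma exists_genLE {I : Submodule Rᵐᵒᵖ R} (hFG : I.FG)
    (hgr : IsGradedSub k R R (grZ k R 𝒜) I) :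
    ∃ d : ℕ, GenLE k R R (grZ k R 𝒜) I (d : ℤ) := by
  obtain ⟨n, x, dx, hx, hxI, hspan⟩ := exists_homog_gens hFG hgr
  classical
  refine ⟨Finset.univ.sup dx, genLE_of_gens hx hxI hspan fun i => ?_⟩
  exact_mod_cast Finset.le_sup (Finset.mem_univ i)

lemma genLE_neg_eq_bot {I : Submodule Rᵐᵒᵖ R} {d : ℤ} (hd : d < 0)
    (hg : GenLE k R R (grZ k R 𝒜) I d) : I = ⊥ := by
  refine le_bot_iff.1 (hg.trans ?_)
  rw [← Submodule.span_empty (R := Rᵐᵒᵖ) (M := R)]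
  apply Submodule.span_le.2
  rintro y ⟨hy, j, hjd, hja⟩
  rw [grZ_neg (hjd.trans_lt hd)] at hja
  simpa using hja

end Aux2
section Aux3

variable {k R : Type} [Field k] [Ring R] [Algebra k R] {𝒜 : ℕ → Submodule k R}
variable [GradedRing 𝒜]

open DirectSum

lemma decompose_mem_of_mem_span {S : Set R} (hS : ∀ x ∈ S, ∃ j : ℤ, x ∈ grZ k R 𝒜 j)
    {N : Submodule Rᵐᵒᵖ R} (hSN : S ⊆ N) {r : R}
    (hr : r ∈ Submodule.span Rᵐᵒᵖ S) (n : ℕ) :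
    (DirectSum.decompose 𝒜 r n : R) ∈ N := by
  classical
  induction hr using Submodule.span_induction generalizing n with
  | mem x hx =>
    obtain ⟨j, hj⟩ := hS x hx
    rcases lt_or_ge j 0 with hneg | hpos
    · rw [grZ_neg hneg] at hj
      simp only [Submodule.mem_bot] at hj
      subst hj
      simp only [decompose_zero, DirectSum.zero_apply, ZeroMemClass.coe_zero]
      exact N.zero_mem
    · rw [grZ, if_pos hpos] at hj
      rcases eq_or_ne j.toNat n with h | h
      · rw [h] at hj
        rw [DirectSum.decompose_of_mem_same 𝒜 hj]
        exact hSN hx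
      · rw [DirectSum.decompose_of_mem_ne 𝒜 hj h]
        exact N.zero_mem
  | zero =>
    simp only [decompose_zero, DirectSum.zero_apply, ZeroMemClass.coe_zero]
    exact N.zero_mem
  | add x y _ _ hx hy =>
    rw [DirectSum.decompose_add, DirectSum.add_apply]
    exact N.add_mem (hx n) (hy n)
  | smul c x _ hx =>
    rw [MulOpposite.smul_eq_mul_unop, ← DirectSum.sum_support_decompose 𝒜 x]
    rw [Finset.sum_mul, DirectSum.decompose_sum, DFinsupp.finset_sum_apply,
      AddSubmonoidClass.coe_finset_sum]
    refine N.sum_mem fun m _ => ?_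
    rw [DirectSum.coe_decompose_mul_of_left_mem 𝒜 n (SetLike.coe_mem _)]
    split
    · exact N.smul_mem (MulOpposite.op _) (hx m)
    · exact N.zero_mem

lemma decompose_mem_of_gradedSub {N : Submodule Rᵐᵒᵖ R}
    (hN : IsGradedSub k R R (grZ k R 𝒜) N) {r : R} (hr : r ∈ N) (n : ℕ) :
    (DirectSum.decompose 𝒜 r n : R) ∈ N :=
  decompose_mem_of_mem_span (fun _ hx => hx.2) (fun _ hx => hx.1) (hN hr) n

lemma gradedSub_of_decompose {N : Submodule Rᵐᵒᵖ R}
    (h : ∀ r ∈ N, ∀ n : ℕ, (DirectSum.decompose 𝒜 r n : R) ∈ N) :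
    IsGradedSub k R R (grZ k R 𝒜) N := by
  classical
  intro r hr
  rw [← DirectSum.sum_support_decompose 𝒜 r]
  refine Submodule.sum_mem _ fun m _ => Submodule.subset_span ?_
  refine ⟨h r hr m, (m : ℤ), ?_⟩
  rw [grZ_natCast]
  exact SetLike.coe_mem _

lemma colon_graded {J : Submodule Rᵐᵒᵖ R} (hJ : IsGradedSub k R R (grZ k R 𝒜) J)
    {x : R} {dxd : ℕ} (hx : x ∈ 𝒜 dxd) :
    IsGradedSub k R R (grZ k R 𝒜) (colon R x J) := by
  refine gradedSub_of_decompose fun a ha n => ?_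
  have : x * (DirectSum.decompose 𝒜 a n : R) = (DirectSum.decompose 𝒜 (x * a) (dxd + n) : R) := by
    rw [DirectSum.coe_decompose_mul_of_left_mem_of_le 𝒜 hx (Nat.le_add_right _ _),
      Nat.add_sub_cancel_left]
  show x * _ ∈ J
  rw [this]
  exact decompose_mem_of_gradedSub hJ ha _

/-- homogeneous lift along a homogeneous generating family. -/
lemma homog_lift {p : ℕ} {y : Fin p → R} {dy : Fin p → ℕ} (hy : ∀ i, y i ∈ 𝒜 (dy i))
    {z : R} {D : ℕ} (hz : z ∈ 𝒜 D) (hmem : z ∈ Submodule.span Rᵐᵒᵖ (Set.range y)) :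
    ∃ w : Fin p → R, (∀ i, w i ∈ grZ k R 𝒜 ((D : ℤ) - dy i)) ∧ ∑ i, y i * w i = z := by
  classical
  obtain ⟨c, hc⟩ := Submodule.mem_span_range_iff_exists_fun Rᵐᵒᵖ |>.1 hmem
  set v : Fin p → R := fun i => (c i).unop with hv
  have hc' : ∑ i, y i * v i = z := by
    rw [← hc]
    refine Finset.sum_congr rfl fun i _ => ?_
    rw [MulOpposite.smul_eq_mul_unop]
  refine ⟨fun i => if dy i ≤ D then (DirectSum.decompose 𝒜 (v i) (D - dy i) : R) else 0,
    fun i => ?_, ?_⟩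
  · dsimp only
    split
    · rename_i hle
      have : ((D : ℤ) - dy i) = ((D - dy i : ℕ) : ℤ) := by omega
      rw [this, grZ_natCast]
      exact SetLike.coe_mem _
    · rename_i hle
      rw [grZ_neg (by omega)]
      exact Submodule.zero_mem _
  · dsimp only
    calc ∑ i, y i * (if dy i ≤ D then (DirectSum.decompose 𝒜 (v i) (D - dy i) : R) else 0)
        = ∑ i, (DirectSum.decompose 𝒜 (y i * v i) D : R) := by
          refine Finset.sum_congr rfl fun i _ => ?_
          rw [DirectSum.coe_decompose_mul_of_left_mem 𝒜 D (hy i)]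
          by_cases h : dy i ≤ D <;> simp [h]
      _ = (DirectSum.decompose 𝒜 (∑ i, y i * v i) D : R) := by
          rw [DirectSum.decompose_sum, DFinsupp.finset_sum_apply, AddSubmonoidClass.coe_finset_sum]
      _ = z := by rw [hc']; exact DirectSum.decompose_of_mem_same 𝒜 hz

end Aux3
section Aux4

variable {k R : Type} [Field k] [Ring R] [Algebra k R]

lemma isSol_iff {n : ℕ} (a v : Fin n → R) : IsSol R R a v ↔ ∑ i, a i * v i = 0 := by
  simp only [IsSol, op_smul_eq_mul]

/-- transfer of finite generation of syzygies along a change of generators. -/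
lemma solSpanBy_transfer {p q m : ℕ} {y : Fin p → R} {z : Fin q → R}
    {h : Fin m → (Fin p → R)} (hsol : SolSpanBy R R y h)
    (hspan : Submodule.span Rᵐᵒᵖ (Set.range z) = Submodule.span Rᵐᵒᵖ (Set.range y)) :
    ∃ (m' : ℕ) (h' : Fin m' → (Fin q → R)), SolSpanBy R R z h' := by
  classical
  -- matrices A and B converting between the two generating families
  have hzy : ∀ j, z j ∈ Submodule.span Rᵐᵒᵖ (Set.range y) :=
    fun j => hspan ▸ Submodule.subset_span ⟨j, rfl⟩
  have hyz : ∀ i, y i ∈ Submodule.span Rᵐᵒᵖ (Set.range z) :=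
    fun i => hspan.symm ▸ Submodule.subset_span ⟨i, rfl⟩
  choose cA hcA using fun j => (Submodule.mem_span_range_iff_exists_fun Rᵐᵒᵖ).1 (hzy j)
  choose cB hcB using fun i => (Submodule.mem_span_range_iff_exists_fun Rᵐᵒᵖ).1 (hyz i)
  set A : Fin p → Fin q → R := fun i j => (cA j i).unop with hA
  set B : Fin q → Fin p → R := fun j i => (cB i j).unop with hB
  have hAz : ∀ j, ∑ i, y i * A i j = z j := by
    intro j
    rw [← hcA j]
    exact Finset.sum_congr rfl fun i _ => by rw [← MulOpposite.op_unop (cA j i), op_smul_eq_mul]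
  have hBy : ∀ i, ∑ j, z j * B j i = y i := by
    intro i
    rw [← hcB i]
    exact Finset.sum_congr rfl fun j _ => by rw [← MulOpposite.op_unop (cB i j), op_smul_eq_mul]
  set g1 : Fin m → Fin q → R := fun t j => ∑ i, B j i * h t i with hg1
  set g2 : Fin q → Fin q → R := fun jw j => (if j = jw then 1 else 0) - ∑ i, B j i * A i jw
    with hg2
  refine ⟨m + q, Fin.append g1 g2, ?_, ?_⟩
  · -- each generator is a solution
    intro t
    rw [isSol_iff]
    refine Fin.addCases (motive := fun t => ∑ j, z j * Fin.append g1 g2 t j = 0) ?_ ?_ t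
    · intro t
      simp only [Fin.append_left]
      calc ∑ j, z j * g1 t j = ∑ i, (∑ j, z j * B j i) * h t i := by
            simp only [hg1, Finset.mul_sum, Finset.sum_mul, mul_assoc]
            rw [Finset.sum_comm]
        _ = ∑ i, y i * h t i := by simp only [hBy]
        _ = 0 := (isSol_iff y (h t)).1 (hsol.1 t)
    · intro jw
      simp only [Fin.append_right]
      calc ∑ j, z j * g2 jw j
          = ∑ j, (z j * if j = jw then 1 else 0) - ∑ i, (∑ j, z j * B j i) * A i jw := by
            simp only [hg2, mul_sub, Finset.sum_sub_distrib, Finset.mul_sum, Finset.sum_mul,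
              mul_assoc]
            rw [Finset.sum_comm]
        _ = z jw - ∑ i, y i * A i jw := by
            simp only [hBy, mul_ite, mul_one, mul_zero, Finset.sum_ite_eq',
              Finset.mem_univ, if_true]
        _ = 0 := by rw [hAz jw, sub_self]
  · -- completeness
    intro v hv
    rw [isSol_iff] at hv
    set Av : Fin p → R := fun i => ∑ j, A i j * v j with hAv
    have hAvSol : IsSol R R y Av := by
      rw [isSol_iff]
      calc ∑ i, y i * Av i = ∑ j, (∑ i, y i * A i j) * v j := by
            simp only [hAv, Finset.mul_sum, Finset.sum_mul, mul_assoc]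
            rw [Finset.sum_comm]
        _ = ∑ j, z j * v j := by simp only [hAz]
        _ = 0 := hv
    obtain ⟨c, hc⟩ := (Submodule.mem_span_range_iff_exists_fun Rᵐᵒᵖ).1 (hsol.2 Av hAvSol)
    have hc' : ∀ i, ∑ t, h t i * (c t).unop = Av i := by
      intro i
      have := congrFun hc i
      simpa only [Finset.sum_apply, Pi.smul_apply, MulOpposite.smul_eq_mul_unop] using this
    have hveq : v = (∑ t, MulOpposite.op ((c t).unop) • g1 t) +
        (∑ jw, MulOpposite.op (v jw) • g2 jw) := by
      funext j
      simp only [Pi.add_apply, Finset.sum_apply, Pi.smul_apply,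
        MulOpposite.smul_eq_mul_unop, MulOpposite.unop_op]
      calc v j = ∑ i, B j i * Av i + (v j - ∑ i, B j i * Av i) := by abel
        _ = ∑ t, g1 t j * (c t).unop + ∑ jw, g2 jw j * v jw := by
            congr 1
            · calc ∑ i, B j i * Av i = ∑ i, B j i * ∑ t, h t i * (c t).unop := by
                    simp only [hc']
                _ = ∑ t, g1 t j * (c t).unop := by
                    simp only [hg1, Finset.mul_sum, Finset.sum_mul, mul_assoc]
                    rw [Finset.sum_comm]
            · calc v j - ∑ i, B j i * Av i
                  = (∑ jw, (if j = jw then 1 else 0) * v jw) -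
                    ∑ i, B j i * ∑ jw, A i jw * v jw := by
                    simp only [hAv, ite_mul, one_mul, zero_mul, Finset.sum_ite_eq,
                      Finset.sum_ite_eq', Finset.mem_univ, if_true]
                _ = ∑ jw, g2 jw j * v jw := by
                    simp only [hg2, sub_mul, Finset.sum_sub_distrib, Finset.mul_sum,
                      Finset.sum_mul, mul_assoc]
                    congr 1
                    rw [Finset.sum_comm]
    rw [hveq]
    refine Submodule.add_mem _ (Submodule.sum_mem _ fun t _ => ?_)
      (Submodule.sum_mem _ fun jw _ => ?_)
    · exact Submodule.smul_mem _ _ (Submodule.subset_span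
        ⟨Fin.castAdd q t, by rw [Fin.append_left]⟩)
    · exact Submodule.smul_mem _ _ (Submodule.subset_span
        ⟨Fin.natAdd m jw, by rw [Fin.append_right]⟩)

end Aux4
section Aux5

variable {k R : Type} [Field k] [Ring R] [Algebra k R] {𝒜 : ℕ → Submodule k R}

lemma range_snoc' {n : ℕ} {α : Type} (f : Fin n → α) (a : α) :
    Set.range (Fin.snoc f a : Fin (n+1) → α) = Set.range f ∪ {a} := by
  ext y
  constructor
  · rintro ⟨i, rfl⟩
    refine Fin.lastCases ?_ ?_ i
    · right; rw [Fin.snoc_last]; rfl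
    · intro j; left; exact ⟨j, by rw [Fin.snoc_castSucc]⟩
  · rintro (⟨i, rfl⟩ | rfl)
    · exact ⟨i.castSucc, by rw [Fin.snoc_castSucc]⟩
    · exact ⟨Fin.last n, by rw [Fin.snoc_last]⟩

/-- the solution module of the linear equation with coefficients `zz`. -/
def solSub {n : ℕ} (zz : Fin n → R) : Submodule Rᵐᵒᵖ (Fin n → R) where
  carrier := {v | ∑ i, zz i * v i = 0}
  add_mem' := by
    intro v w hv hw
    simp only [Set.mem_setOf_eq, Pi.add_apply, mul_add, Finset.sum_add_distrib] at *
    rw [hv, hw, add_zero]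
  zero_mem' := by simp
  smul_mem' := by
    intro c v hv
    simp only [Set.mem_setOf_eq, Pi.smul_apply, MulOpposite.smul_eq_mul_unop] at *
    calc ∑ i, zz i * (v i * c.unop) = (∑ i, zz i * v i) * c.unop := by
          rw [Finset.sum_mul]
          exact Finset.sum_congr rfl fun i _ => (mul_assoc _ _ _).symm
      _ = 0 := by rw [hv, zero_mul]

lemma mem_solSub {n : ℕ} {zz v : Fin n → R} : v ∈ solSub zz ↔ ∑ i, zz i * v i = 0 :=
  Iff.rfl

lemma isSol_iff_mem_solSub {n : ℕ} {zz v : Fin n → R} : IsSol R R zz v ↔ v ∈ solSub zz := by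
  rw [isSol_iff, mem_solSub]

lemma colon_fg_of_sols {p m : ℕ} {g : Fin p → R} {x : R}
    {h' : Fin m → (Fin (p+1) → R)} (hs : SolSpanBy R R (Fin.snoc g x) h') :
    (colon R x (Submodule.span Rᵐᵒᵖ (Set.range g))).FG := by
  classical
  set J := Submodule.span Rᵐᵒᵖ (Set.range g) with hJ
  refine ⟨(Finset.univ.image fun t => h' t (Fin.last p)), ?_⟩
  rw [Finset.coe_image, Finset.coe_univ, Set.image_univ]
  apply le_antisymm
  · -- each generator lies in the colon ideal
    rw [Submodule.span_le]
    rintro _ ⟨t, rfl⟩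
    have ht := (isSol_iff _ _).1 (hs.1 t)
    rw [Fin.sum_univ_castSucc] at ht
    simp only [Fin.snoc_castSucc, Fin.snoc_last] at ht
    have : x * h' t (Fin.last p) = -(∑ i : Fin p, g i * h' t i.castSucc) := by
      exact eq_neg_of_add_eq_zero_right ht
    show x * h' t (Fin.last p) ∈ J
    rw [this]
    exact J.neg_mem (J.sum_mem fun i _ => J.smul_mem (MulOpposite.op _)
      (Submodule.subset_span ⟨i, rfl⟩))
  · -- the colon ideal is contained in the span of the generators
    intro b hb
    have hxb : x * b ∈ J := hb
    obtain ⟨c, hc⟩ := (Submodule.mem_span_range_iff_exists_fun Rᵐᵒᵖ).1 hxb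
    set v : Fin (p+1) → R := Fin.snoc (fun i => -((c i).unop)) b with hv
    have hvsol : IsSol R R (Fin.snoc g x) v := by
      rw [isSol_iff, Fin.sum_univ_castSucc]
      simp only [hv, Fin.snoc_castSucc, Fin.snoc_last]
      have : ∑ i : Fin p, g i * -((c i).unop) = -(x * b) := by
        rw [← hc, ← Finset.sum_neg_distrib]
        exact Finset.sum_congr rfl fun i _ => by
          rw [MulOpposite.smul_eq_mul_unop, mul_neg]
      rw [this, neg_add_cancel]
    obtain ⟨c2, hc2⟩ := (Submodule.mem_span_range_iff_exists_fun Rᵐᵒᵖ).1 (hs.2 v hvsol)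
    have : b = ∑ t, h' t (Fin.last p) * (c2 t).unop := by
      have := congrFun hc2 (Fin.last p)
      simp only [Finset.sum_apply, Pi.smul_apply, MulOpposite.smul_eq_mul_unop] at this
      rw [this, hv, Fin.snoc_last]
    rw [this]
    exact Submodule.sum_mem _ fun t _ => Submodule.smul_mem _ (MulOpposite.op ((c2 t).unop))
      (Submodule.subset_span ⟨t, rfl⟩)

/-- extract an irredundant-at-the-top generating family. -/
lemma exists_irred {P : R → Prop} : ∀ (n : ℕ) (x : Fin n → R), (∀ i, P (x i)) →
    Submodule.span Rᵐᵒᵖ (Set.range x) ≠ ⊥ →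
    ∃ (p : ℕ) (g : Fin p → R) (a : R), (∀ i, P (g i)) ∧ P a ∧
      a ∉ Submodule.span Rᵐᵒᵖ (Set.range g) ∧
      Submodule.span Rᵐᵒᵖ (Set.range (Fin.snoc g a : Fin (p+1) → R)) =
        Submodule.span Rᵐᵒᵖ (Set.range x) := by
  intro n
  induction n with
  | zero =>
    intro x hP hne
    exact absurd (by rw [Set.range_eq_empty x, Submodule.span_empty]) hne
  | succ n ih =>
    intro x hP hne
    set g := Fin.init x with hg
    set a := x (Fin.last n) with ha
    have hx : (Fin.snoc g a : Fin (n+1) → R) = x := Fin.snoc_init_self x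
    by_cases hmem : a ∈ Submodule.span Rᵐᵒᵖ (Set.range g)
    · have hspan : Submodule.span Rᵐᵒᵖ (Set.range g) = Submodule.span Rᵐᵒᵖ (Set.range x) := by
        rw [← hx, range_snoc', Submodule.span_union]
        exact (sup_eq_left.2 ((Submodule.span_singleton_le_iff_mem a _).2 hmem)).symm
      obtain ⟨p, g', a', h1, h2, h3, h4⟩ := ih g (fun i => hP i.castSucc) (by rw [hspan]; exact hne)
      exact ⟨p, g', a', h1, h2, h3, by rw [h4, hspan]⟩
    · exact ⟨n, g, a, fun i => hP i.castSucc, hP (Fin.last n), hmem, by rw [hx]⟩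

lemma k_span_le_op_span {S : Set R} {v : R} (hv : v ∈ Submodule.span k S) :
    v ∈ Submodule.span Rᵐᵒᵖ S := by
  induction hv using Submodule.span_induction with
  | mem x hx => exact Submodule.subset_span hx
  | zero => exact Submodule.zero_mem _
  | add x y _ _ hx hy => exact Submodule.add_mem _ hx hy
  | smul c x _ hx =>
    have : c • x = MulOpposite.op (algebraMap k R c) • x := by
      rw [op_smul_eq_mul, Algebra.smul_def, Algebra.commutes]
    rw [this]
    exact Submodule.smul_mem _ _ hx

lemma grade_one_mul (hconn : IsConnAlg k R 𝒜) (hstd : ∀ n : ℕ, 𝒜 (n + 1) = 𝒜 n * 𝒜 1) :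
    ∀ n : ℕ, 𝒜 (n + 1) = 𝒜 1 * 𝒜 n := by
  intro n
  induction n with
  | zero =>
    rw [hstd 0, hconn.2.2, ← Submodule.one_eq_span, one_mul, mul_one]
  | succ n ih =>
    rw [hstd (n+1), ih, mul_assoc, ← hstd n, ih]

lemma aug_eq_span (hconn : IsConnAlg k R 𝒜) (hstd : ∀ n : ℕ, 𝒜 (n + 1) = 𝒜 n * 𝒜 1) :
    aug k R 𝒜 = Submodule.span Rᵐᵒᵖ ((𝒜 1 : Set R)) := by
  apply le_antisymm
  · rw [aug, Submodule.span_le]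
    intro v hv
    simp only [Set.mem_iUnion] at hv
    obtain ⟨i, hi, hvi⟩ := hv
    obtain ⟨m, rfl⟩ : ∃ m, i = m + 1 := ⟨i - 1, by omega⟩
    rw [grade_one_mul hconn hstd m] at hvi
    refine Submodule.mul_induction_on hvi ?_ ?_
    · intro p hp q hq
      have : p * q = MulOpposite.op q • p := (op_smul_eq_mul ..).symm
      rw [this]
      exact Submodule.smul_mem _ _ (Submodule.subset_span hp)
    · intro p q hp hq
      exact Submodule.add_mem _ hp hq
  · refine Submodule.span_le.2 fun v hv => Submodule.subset_span ?_
    simp only [Set.mem_iUnion]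
    exact ⟨1, le_refl 1, hv⟩

lemma aug_fg (hconn : IsConnAlg k R 𝒜) (hstd : ∀ n : ℕ, 𝒜 (n + 1) = 𝒜 n * 𝒜 1)
    (hfd : FiniteDimensional k (𝒜 1)) : (aug k R 𝒜).FG := by
  have hfg : (𝒜 1).FG := (Submodule.fg_iff_finiteDimensional _).2 hfd
  obtain ⟨T, hT⟩ := hfg
  refine ⟨T, ?_⟩
  rw [aug_eq_span hconn hstd]
  apply le_antisymm
  · refine Submodule.span_le.2 fun t ht => Submodule.subset_span ?_
    rw [← hT]
    exact Submodule.subset_span ht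
  · refine Submodule.span_le.2 fun v hv => ?_
    have : v ∈ Submodule.span k (T : Set R) := by rw [hT]; exact hv
    exact k_span_le_op_span this

lemma aug_graded (hconn : IsConnAlg k R 𝒜) : IsGradedSub k R R (grZ k R 𝒜) (aug k R 𝒜) := by
  rw [IsGradedSub, aug, Submodule.span_le]
  intro v hv
  simp only [Set.mem_iUnion] at hv
  obtain ⟨i, hi, hvi⟩ := hv
  refine Submodule.subset_span ⟨Submodule.subset_span ?_, (i : ℤ), ?_⟩
  · simp only [Set.mem_iUnion]; exact ⟨i, hi, hvi⟩
  · rw [grZ_natCast]; exact hvi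

lemma gradedSub_of_homog_gens {n : ℕ} {g : Fin n → R} {dg : Fin n → ℕ}
    (hg : ∀ i, g i ∈ 𝒜 (dg i)) :
    IsGradedSub k R R (grZ k R 𝒜) (Submodule.span Rᵐᵒᵖ (Set.range g)) := by
  rw [IsGradedSub, Submodule.span_le]
  rintro _ ⟨i, rfl⟩
  refine Submodule.subset_span ⟨Submodule.subset_span ⟨i, rfl⟩, (dg i : ℤ), ?_⟩
  rw [grZ_natCast]
  exact hg i

end Aux5
section Aux6

variable {k R : Type} [Field k] [Ring R] [Algebra k R] {𝒜 : ℕ → Submodule k R}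

lemma locFin_of (hconn : IsConnAlg k R 𝒜) (hstd : ∀ n : ℕ, 𝒜 (n + 1) = 𝒜 n * 𝒜 1)
    (hfd : FiniteDimensional k (𝒜 1)) : ∀ n : ℕ, FiniteDimensional k (𝒜 n) := by
  intro n
  induction n with
  | zero =>
    rw [hconn.2.2]
    exact (Submodule.fg_iff_finiteDimensional _).1 (Submodule.fg_span_singleton 1)
  | succ n ih =>
    rw [hstd n]
    exact (Submodule.fg_iff_finiteDimensional _).1
      (Submodule.FG.mul ((Submodule.fg_iff_finiteDimensional _).2 ih)
        ((Submodule.fg_iff_finiteDimensional _).2 hfd))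

/-- the minimal natural degree of generation. -/
noncomputable def mdegN (𝒜 : ℕ → Submodule k R) (I : Submodule Rᵐᵒᵖ R) : ℕ :=
  sInf {n : ℕ | GenLE k R R (grZ k R 𝒜) I (n : ℤ)}

lemma mdegN_spec {I : Submodule Rᵐᵒᵖ R}
    (h : ∃ nn : ℕ, GenLE k R R (grZ k R 𝒜) I (nn : ℤ)) :
    GenLE k R R (grZ k R 𝒜) I ((mdegN 𝒜 I : ℕ) : ℤ) :=
  Nat.sInf_mem h

lemma mdegN_min {I : Submodule Rᵐᵒᵖ R} {dI : ℤ} (hg : GenLE k R R (grZ k R 𝒜) I dI)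
    (hne : I ≠ ⊥) : ((mdegN 𝒜 I : ℕ) : ℤ) ≤ dI := by
  rcases lt_or_ge dI 0 with hneg | hpos
  · exact absurd (genLE_neg_eq_bot hneg hg) hne
  · have : GenLE k R R (grZ k R 𝒜) I ((dI.toNat : ℕ) : ℤ) := by
      rwa [Int.toNat_of_nonneg hpos]
    have h2 : mdegN 𝒜 I ≤ dI.toNat := Nat.sInf_le this
    omega

/-- size measure for the induction. -/
noncomputable def mu (𝒜 : ℕ → Submodule k R) (I : Submodule Rᵐᵒᵖ R) : ℕ :=
  ∑ j ∈ Finset.range (mdegN 𝒜 I + 1), Module.finrank k ↥(𝒜 j ⊓ I.restrictScalars k)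

lemma mu_lt (hloc : ∀ n : ℕ, FiniteDimensional k (𝒜 n)) {I J : Submodule Rᵐᵒᵖ R}
    (hJI : J ≤ I) (hne : J ≠ I) (hIne : I ≠ ⊥)
    (hIgen : ∃ nn : ℕ, GenLE k R R (grZ k R 𝒜) I (nn : ℤ))
    (hgen : ∀ dI : ℤ, GenLE k R R (grZ k R 𝒜) I dI → GenLE k R R (grZ k R 𝒜) J dI) :
    mu 𝒜 J < mu 𝒜 I := by
  classical
  set dI := mdegN 𝒜 I with hdI
  have hI : GenLE k R R (grZ k R 𝒜) I ((dI : ℕ) : ℤ) := mdegN_spec hIgen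
  have hJ : GenLE k R R (grZ k R 𝒜) J ((dI : ℕ) : ℤ) := hgen _ hI
  have hdJ : mdegN 𝒜 J ≤ dI := Nat.sInf_le hJ
  haveI : ∀ j : ℕ, FiniteDimensional k ↥(𝒜 j ⊓ I.restrictScalars k) := fun j =>
    haveI := hloc j
    Submodule.finiteDimensional_of_le (inf_le_left (b := I.restrictScalars k))
  have hle : ∀ j : ℕ, 𝒜 j ⊓ J.restrictScalars k ≤ 𝒜 j ⊓ I.restrictScalars k := fun j =>
    inf_le_inf_left _ (fun y hy => hJI hy)
  have hex : ∃ j0 : ℕ, j0 ≤ dI ∧ 𝒜 j0 ⊓ J.restrictScalars k ≠ 𝒜 j0 ⊓ I.restrictScalars k := by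
    by_contra hcon
    push_neg at hcon
    have hIJ : I ≤ J := by
      refine hI.trans (Submodule.span_le.2 ?_)
      rintro y ⟨hyI, jz, hjz, hygr⟩
      rcases lt_or_ge jz 0 with hneg | hpos
      · rw [grZ_neg hneg] at hygr
        simp only [Submodule.mem_bot] at hygr
        exact hygr ▸ J.zero_mem
      · rw [grZ, if_pos hpos] at hygr
        have hj0 : jz.toNat ≤ dI := by omega
        have : y ∈ 𝒜 jz.toNat ⊓ I.restrictScalars k := ⟨hygr, hyI⟩
        rw [← hcon jz.toNat hj0] at this
        exact this.2
    exact hne (le_antisymm hJI hIJ)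
  obtain ⟨j0, hj0le, hj0ne⟩ := hex
  have hstrict : Module.finrank k ↥(𝒜 j0 ⊓ J.restrictScalars k) <
      Module.finrank k ↥(𝒜 j0 ⊓ I.restrictScalars k) :=
    Submodule.finrank_lt_finrank_of_lt (lt_of_le_of_ne (hle j0) hj0ne)
  calc mu 𝒜 J
      = ∑ j ∈ Finset.range (mdegN 𝒜 J + 1),
          Module.finrank k ↥(𝒜 j ⊓ J.restrictScalars k) := rfl
    _ ≤ ∑ j ∈ Finset.range (dI + 1), Module.finrank k ↥(𝒜 j ⊓ J.restrictScalars k) :=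
        Finset.sum_le_sum_of_subset (Finset.range_subset_range.2 (by omega))
    _ < ∑ j ∈ Finset.range (dI + 1), Module.finrank k ↥(𝒜 j ⊓ I.restrictScalars k) := by
        refine Finset.sum_lt_sum (fun j _ => Submodule.finrank_mono (hle j)) ?_
        exact ⟨j0, Finset.mem_range.2 (by omega), hstrict⟩
    _ = mu 𝒜 I := rfl

lemma botFinPres : IdealFinPres k R 𝒜 (⊥ : Submodule Rᵐᵒᵖ R) := by
  refine ⟨0, Fin.elim0, Fin.elim0, fun i => i.elim0, ?_, 0, Fin.elim0, Fin.elim0,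
    fun j => j.elim0, fun j => j.elim0, fun v _ => ?_⟩
  · rw [Set.range_eq_empty, Submodule.span_empty]
  · rw [Subsingleton.elim v 0]
    exact Submodule.zero_mem _

end Aux6
section Aux7

variable {k R : Type} [Field k] [Ring R] [Algebra k R] {𝒜 : ℕ → Submodule k R}

lemma finPres_extend [GradedRing 𝒜] {J : Submodule Rᵐᵒᵖ R} (hJpres : IdealFinPres k R 𝒜 J)
    {x : R} {dxd : ℕ} (hx : x ∈ 𝒜 dxd)
    (hCFG : (colon R x J).FG) (hCgr : IsGradedSub k R R (grZ k R 𝒜) (colon R x J)) :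
    IdealFinPres k R 𝒜 (J ⊔ Submodule.span Rᵐᵒᵖ {x}) := by
  classical
  obtain ⟨p, y, dy, hy, hyspan, mJ, hJs, eJ, hhomJ, hsolJ⟩ := hJpres
  obtain ⟨q, a, da, haA, haC, haspan⟩ := exists_homog_gens hCFG hCgr
  have hfac : ∀ s, x * a s ∈ J := fun s => haC s
  have hdeg : ∀ s, x * a s ∈ 𝒜 (dxd + da s) := fun s => SetLike.mul_mem_graded hx (haA s)
  choose w hw1 hw2 using fun s => homog_lift hy (hdeg s) (hyspan.symm ▸ hfac s)
  set z : Fin (p+1) → R := Fin.snoc y x with hz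
  set dz : Fin (p+1) → ℕ := Fin.snoc dy dxd with hdz
  have hzA : ∀ i, z i ∈ 𝒜 (dz i) := by
    intro i
    refine Fin.lastCases ?_ ?_ i
    · simp only [hz, hdz, Fin.snoc_last]; exact hx
    · intro i0; simp only [hz, hdz, Fin.snoc_castSucc]; exact hy i0
  have hzspan : Submodule.span Rᵐᵒᵖ (Set.range z) = J ⊔ Submodule.span Rᵐᵒᵖ {x} := by
    rw [hz, range_snoc', Submodule.span_union, hyspan]
  set hb : Fin mJ → Fin (p+1) → R := fun t => Fin.snoc (hJs t) 0 with hhb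
  set hcg : Fin q → Fin (p+1) → R := fun s => Fin.snoc (fun i => -(w s i)) (a s) with hhcg
  set h' : Fin (mJ + q) → Fin (p+1) → R := Fin.append hb hcg with hh'
  set e' : Fin (mJ + q) → ℤ := Fin.append eJ (fun s => ((dxd + da s : ℕ) : ℤ)) with he'
  have hsolb : ∀ t, IsSol R R z (hb t) := by
    intro t
    rw [isSol_iff, Fin.sum_univ_castSucc]
    simp only [hz, hhb, Fin.snoc_castSucc, Fin.snoc_last, mul_zero, add_zero]
    exact (isSol_iff _ _).1 (hsolJ.1 t)
  have hsolc : ∀ s, IsSol R R z (hcg s) := by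
    intro s
    rw [isSol_iff, Fin.sum_univ_castSucc]
    simp only [hz, hhcg, Fin.snoc_castSucc, Fin.snoc_last, mul_neg]
    rw [Finset.sum_neg_distrib, hw2 s, neg_add_cancel]
  refine ⟨p+1, z, dz, hzA, hzspan, mJ + q, h', e', ?_, ?_, ?_⟩
  · -- homogeneity of the syzygies
    intro j
    refine Fin.addCases (motive := fun j => FreeHomog k R 𝒜 (fun i => (dz i : ℤ)) (h' j) (e' j))
      ?_ ?_ j
    · intro t i
      simp only [hh', he', Fin.append_left]
      refine Fin.lastCases ?_ ?_ i
      · simp only [hhb, Fin.snoc_last]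
        exact Submodule.zero_mem _
      · intro i0
        simp only [hhb, hdz, Fin.snoc_castSucc]
        exact hhomJ t i0
    · intro s i
      simp only [hh', he', Fin.append_right]
      refine Fin.lastCases ?_ ?_ i
      · simp only [hhcg, hdz, Fin.snoc_last]
        have : ((dxd + da s : ℕ) : ℤ) - (dxd : ℤ) = ((da s : ℕ) : ℤ) := by push_cast; ring
        rw [this, grZ_natCast]
        exact haA s
      · intro i0
        simp only [hhcg, hdz, Fin.snoc_castSucc]
        exact Submodule.neg_mem _ (hw1 s i0)
  · -- each syzygy is a solution
    intro j
    refine Fin.addCases (motive := fun j => IsSol R R z (h' j)) ?_ ?_ j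
    · intro t; simp only [hh', Fin.append_left]; exact hsolb t
    · intro s; simp only [hh', Fin.append_right]; exact hsolc s
  · -- the syzygies generate all solutions
    intro v hv
    have hv' := (isSol_iff _ _).1 hv
    rw [Fin.sum_univ_castSucc] at hv'
    simp only [hz, Fin.snoc_castSucc, Fin.snoc_last] at hv'
    have hvlast : v (Fin.last p) ∈ colon R x J := by
      show x * v (Fin.last p) ∈ J
      have : x * v (Fin.last p) = -(∑ i : Fin p, y i * v i.castSucc) :=
        eq_neg_of_add_eq_zero_right hv'
      rw [this, ← hyspan]
      exact Submodule.neg_mem _ (Submodule.sum_mem _ fun i _ =>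
        Submodule.smul_mem _ (MulOpposite.op _) (Submodule.subset_span ⟨i, rfl⟩))
    have : v (Fin.last p) ∈ Submodule.span Rᵐᵒᵖ (Set.range a) := haspan.symm ▸ hvlast
    obtain ⟨c, hc⟩ := (Submodule.mem_span_range_iff_exists_fun Rᵐᵒᵖ).1 this
    set v' : Fin (p+1) → R := v - ∑ s, c s • hcg s with hv'def
    have hv'sol : v' ∈ solSub z := by
      refine Submodule.sub_mem _ ((isSol_iff_mem_solSub).1 hv) ?_
      exact Submodule.sum_mem _ fun s _ =>
        Submodule.smul_mem _ _ ((isSol_iff_mem_solSub).1 (hsolc s))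
    have hlast0 : v' (Fin.last p) = 0 := by
      simp only [hv'def, Pi.sub_apply, Finset.sum_apply, Pi.smul_apply,
        MulOpposite.smul_eq_mul_unop]
      have : ∀ s, hcg s (Fin.last p) = a s := fun s => by
        simp only [hhcg, Fin.snoc_last]
      simp only [this]
      rw [sub_eq_zero, ← hc]
      exact (Finset.sum_congr rfl fun s _ => (MulOpposite.smul_eq_mul_unop ..)).symm
    set u : Fin p → R := fun i => v' i.castSucc with hu
    have husol : IsSol R R y u := by
      rw [isSol_iff]
      have h1 := (mem_solSub).1 hv'sol
      rw [Fin.sum_univ_castSucc] at h1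
      simp only [hz, Fin.snoc_castSucc, Fin.snoc_last, hlast0, mul_zero, add_zero] at h1
      exact h1
    obtain ⟨c2, hc2⟩ := (Submodule.mem_span_range_iff_exists_fun Rᵐᵒᵖ).1 (hsolJ.2 u husol)
    have hveq : v = (∑ t, c2 t • hb t) + ∑ s, c s • hcg s := by
      have hv'eq : v' = ∑ t, c2 t • hb t := by
        funext i
        refine Fin.lastCases ?_ ?_ i
        · rw [hlast0]
          simp only [Finset.sum_apply, Pi.smul_apply, MulOpposite.smul_eq_mul_unop]
          have : ∀ t, hb t (Fin.last p) = 0 := fun t => by simp only [hhb, Fin.snoc_last]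
          simp only [this, zero_mul]
          rw [Finset.sum_const_zero]
        · intro i0
          have h1 : v' i0.castSucc = u i0 := rfl
          have h2 := congrFun hc2 i0
          simp only [Finset.sum_apply, Pi.smul_apply, MulOpposite.smul_eq_mul_unop] at h2 ⊢
          rw [h1, ← h2]
          refine Finset.sum_congr rfl fun t _ => ?_
          have : hb t i0.castSucc = hJs t i0 := by simp only [hhb, Fin.snoc_castSucc]
          rw [this]
      have := sub_add_cancel v (∑ s, c s • hcg s)
      rw [← this, ← hv'def, hv'eq]
    rw [hveq]
    refine Submodule.add_mem _ (Submodule.sum_mem _ fun t _ => Submodule.smul_mem _ _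
      (Submodule.subset_span ⟨Fin.castAdd q t, ?_⟩))
      (Submodule.sum_mem _ fun s _ => Submodule.smul_mem _ _
      (Submodule.subset_span ⟨Fin.natAdd mJ s, ?_⟩))
    · rw [hh', Fin.append_left]
    · rw [hh', Fin.append_right]

end Aux7
section Main

variable {k R : Type} [Field k] [Ring R] [Algebra k R] {𝒜 : ℕ → Submodule k R}

lemma gradedCoherent_of_cohFam (hconn : IsConnAlg k R 𝒜)
    (hstd : ∀ n : ℕ, 𝒜 (n + 1) = 𝒜 n * 𝒜 1) (hfd : FiniteDimensional k (𝒜 1))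
    (hF : IsCohFam k R 𝒜 {I : Submodule Rᵐᵒᵖ R | I.FG ∧ IsGradedSub k R R (grZ k R 𝒜) I}) :
    GradedCoherent k R 𝒜 := by
  letI : GradedRing 𝒜 := mkGradedRing hconn
  have hloc := locFin_of hconn hstd hfd
  obtain ⟨hsub, hbot, haug, hstep⟩ := hF
  intro I hFG hgr
  suffices H : ∀ N : ℕ, ∀ I : Submodule Rᵐᵒᵖ R, I.FG → IsGradedSub k R R (grZ k R 𝒜) I →
      mu 𝒜 I ≤ N → IdealFinPres k R 𝒜 I from H (mu 𝒜 I) I hFG hgr le_rfl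
  intro N
  induction N using Nat.strong_induction_on with
  | _ N ih =>
    intro I hFG hgr hmu
    by_cases hbotI : I = ⊥
    · exact hbotI ▸ botFinPres
    · obtain ⟨J, hJF, hJneI, x, ⟨dxd, hxA⟩, hxI, hIeq, hgenle, hcolF⟩ :=
        hstep I ⟨hFG, hgr⟩ hbotI
      have hJFG := (hsub J hJF).1
      have hJgr := (hsub J hJF).2
      have hIgen : ∃ nn : ℕ, GenLE k R R (grZ k R 𝒜) I ((nn : ℕ) : ℤ) :=
        exists_genLE hFG hgr
      have hJI : J ≤ I := hIeq ▸ le_sup_left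
      have hmuJ : mu 𝒜 J < mu 𝒜 I := mu_lt hloc hJI hJneI hbotI hIgen hgenle
      have hJpres : IdealFinPres k R 𝒜 J :=
        ih (mu 𝒜 J) (lt_of_lt_of_le hmuJ hmu) J hJFG hJgr le_rfl
      have := finPres_extend hJpres hxA (hsub _ hcolF).1 (hsub _ hcolF).2
      rwa [← hIeq] at this

lemma cohFam_of_gradedCoherent (hconn : IsConnAlg k R 𝒜)
    (hstd : ∀ n : ℕ, 𝒜 (n + 1) = 𝒜 n * 𝒜 1) (hfd : FiniteDimensional k (𝒜 1))
    (hcoh : GradedCoherent k R 𝒜) :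
    IsCohFam k R 𝒜 {I : Submodule Rᵐᵒᵖ R | I.FG ∧ IsGradedSub k R R (grZ k R 𝒜) I} := by
  letI : GradedRing 𝒜 := mkGradedRing hconn
  refine ⟨fun I hI => hI, ⟨Submodule.fg_bot, bot_le⟩,
    ⟨aug_fg hconn hstd hfd, aug_graded hconn⟩, ?_⟩
  intro I hIF hIne
  obtain ⟨hFG, hgr⟩ := hIF
  have hIgen : ∃ nn : ℕ, GenLE k R R (grZ k R 𝒜) I ((nn : ℕ) : ℤ) := exists_genLE hFG hgr
  set d := mdegN 𝒜 I with hd0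
  have hd : GenLE k R R (grZ k R 𝒜) I ((d : ℕ) : ℤ) := mdegN_spec hIgen
  obtain ⟨n, x0, hx0S, hx0span⟩ := exists_fin_gens hFG
    (S := {y : R | y ∈ I ∧ ∃ j ≤ ((d : ℕ) : ℤ), y ∈ grZ k R 𝒜 j}) (fun y hy => hy.1) hd
  obtain ⟨p, g, a, hgS, haS, hnotmem, hsnocspan⟩ := exists_irred n x0 hx0S
    (by rw [hx0span]; exact hIne)
  set J := Submodule.span Rᵐᵒᵖ (Set.range g) with hJdef
  have hgdeg : ∀ i, ∃ dgi : ℕ, (dgi : ℤ) ≤ ((d : ℕ) : ℤ) ∧ g i ∈ 𝒜 dgi := by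
    intro i
    obtain ⟨hgI, j, hjle, hjgr⟩ := hgS i
    rcases lt_or_ge j 0 with hneg | hpos
    · rw [grZ_neg hneg] at hjgr
      simp only [Submodule.mem_bot] at hjgr
      exact ⟨0, by exact_mod_cast Nat.zero_le d, by rw [hjgr]; exact (𝒜 0).zero_mem⟩
    · exact ⟨j.toNat, by omega, by rwa [grZ, if_pos hpos] at hjgr⟩
  choose dg hdgle hdgA using hgdeg
  have hgJ : ∀ i, g i ∈ J := fun i => Submodule.subset_span ⟨i, rfl⟩
  have hJgr : IsGradedSub k R R (grZ k R 𝒜) J := gradedSub_of_homog_gens hdgA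
  have hIeq : I = J ⊔ Submodule.span Rᵐᵒᵖ {a} := by
    rw [← hx0span, ← hsnocspan, range_snoc', Submodule.span_union]
  have hane : a ≠ 0 := fun h => hnotmem (h ▸ J.zero_mem)
  obtain ⟨haI, ja, hjale, hjagr⟩ := haS
  have hja0 : 0 ≤ ja := by
    by_contra hcon
    push_neg at hcon
    rw [grZ_neg hcon] at hjagr
    simp only [Submodule.mem_bot] at hjagr
    exact hane hjagr
  have hxA : a ∈ 𝒜 ja.toNat := by rwa [grZ, if_pos hja0] at hjagr
  refine ⟨J, ⟨Submodule.fg_span (Set.finite_range g), hJgr⟩, ?_, a, ⟨ja.toNat, hxA⟩, haI,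
    hIeq, ?_, ?_⟩
  · intro hJI
    exact hnotmem (hJI ▸ haI)
  · intro dI hgenI
    have hdle : ((d : ℕ) : ℤ) ≤ dI := mdegN_min hgenI hIne
    exact genLE_of_gens hdgA hgJ rfl (fun i => (hdgle i).trans hdle)
  · constructor
    · obtain ⟨nn, y, dy, hy, hyspan, m, h, e, hhom, hsol⟩ := hcoh I hFG hgr
      obtain ⟨m', h', hs'⟩ := solSpanBy_transfer hsol
        (by rw [hsnocspan, hx0span, hyspan])
      exact colon_fg_of_sols hs'
    · exact colon_graded hJgr hxA

end Main

/-- a standard connected algebra is graded right coherent iff the family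
of all finitely generated homogeneous right ideals is a coherent family. -/
theorem statement_13 (k R : Type) [Field k] [Ring R] [Algebra k R]
    (𝒜 : ℕ → Submodule k R) (hconn : IsConnAlg k R 𝒜)
    (hstd : ∀ n : ℕ, 𝒜 (n + 1) = 𝒜 n * 𝒜 1)
    (hfd : FiniteDimensional k (𝒜 1)) :
    GradedCoherent k R 𝒜 ↔
      IsCohFam k R 𝒜
        {I : Submodule Rᵐᵒᵖ R | I.FG ∧ IsGradedSub k R R (grZ k R 𝒜) I} := by
  constructor
  · exact fun h => cohFam_of_gradedCoherent hconn hstd hfd h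
  · exact fun h => gradedCoherent_of_cohFam hconn hstd hfd h

end NCG
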